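/- In an SP-structure satisfying Symmetry, Non-negativity, Boundedness, O-Projection, and Factorization, two states x,y satisfy p(x,z) = p(y,z) for every state z if and only if p(x,y) = 1. -/

import Mathlib

variable {Ω : Type*}

def IsOrtho (p : Ω → Ω → ℝ) (A : Set Ω) : Prop :=
  ∀ x ∈ A, ∀ y ∈ A, x ≠ y → p x y = 0

noncomputable def pSet (p : Ω → Ω → ℝ) (x : Ω) (A : Set Ω) : ℝ :=
  ∑' a : A, p x a

def Symm (p : Ω → Ω → ℝ) : Prop := ∀ x y, p x y = p y x

def Nonneg (p : Ω → Ω → ℝ) : Prop := ∀ x y, 0 ≤ p x y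

def Bounded (p : Ω → Ω → ℝ) : Prop :=
  ∀ (x : Ω) (A : Set Ω), IsOrtho p A →
    Summable (fun a : A => p x a) ∧ pSet p x A ≤ 1

def OProj (p : Ω → Ω → ℝ) : Prop :=
  ∀ (x : Ω) (A : Set Ω), IsOrtho p A → pSet p x A < 1 →
    ∃ y, pSet p y A = 0 ∧ pSet p x A + p x y = 1

def Factor (p : Ω → Ω → ℝ) : Prop :=
  ∀ (x y z : Ω) (A : Set Ω), IsOrtho p A → pSet p y A = 1 → pSet p z A = 1 →
    p x y = pSet p x A → p x z = p x y * p y z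

def Subgen (p : Ω → Ω → ℝ) (A : Set Ω) : Set Ω := {x | pSet p x A = 1}

def IsSubspace (p : Ω → Ω → ℝ) (X : Set Ω) : Prop :=
  ∃ A, IsOrtho p A ∧ X = Subgen p A

def Standard (p : Ω → Ω → ℝ) : Prop := ∀ x y, p x y = 1 → x = y

/-! O-Projection applied to the ortho-set `{x}` forces `p x x = 1`, which gives the forward
direction. Conversely, if `p x y = 1`, Factorization on the ortho-set `{y}` (with `x` and `y`
both in its subspace) yields `p z x = p z y * p y x = p z y`. -/

lemma isOrtho_singleton (p : Ω → Ω → ℝ) (a : Ω) : IsOrtho p {a} := by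
  intro u hu v hv hne
  exact absurd (hu.trans hv.symm) hne

lemma pSet_singleton (p : Ω → Ω → ℝ) (x a : Ω) : pSet p x {a} = p x a := by
  simp [pSet]

lemma self_eq_one_of_oProj {p : Ω → Ω → ℝ} (hsymm : Symm p) (hbdd : Bounded p)
    (hproj : OProj p) (x : Ω) : p x x = 1 := by
  have hle : p x x ≤ 1 := by
    simpa only [pSet_singleton] using (hbdd x {x} (isOrtho_singleton p x)).2
  refine hle.eq_or_lt.resolve_right fun hlt => ?_
  obtain ⟨w, hwx, hsum⟩ :=
    hproj x {x} (isOrtho_singleton p x) (by rwa [pSet_singleton])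
  rw [pSet_singleton] at hwx hsum
  rw [hsymm x w, hwx, add_zero] at hsum
  exact hlt.ne hsum

lemma factor_of_eq_one {p : Ω → Ω → ℝ} (hfac : Factor p) {x y : Ω} (hyy : p y y = 1)
    (hxy : p x y = 1) (z : Ω) : p z x = p z y * p y x := by
  refine hfac z y x {y} (isOrtho_singleton p y) ?_ ?_ (pSet_singleton p z y).symm
  · rwa [pSet_singleton]
  · rwa [pSet_singleton]

theorem stmt9_general (p : Ω → Ω → ℝ) (h1 : Symm p) (h3 : Bounded p)
    (h4 : OProj p) (h5 : Factor p) (x y : Ω) :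
    (∀ z : Ω, p x z = p y z) ↔ p x y = 1 := by
  have hself := self_eq_one_of_oProj h1 h3 h4
  refine ⟨fun h => (h y).trans (hself y), fun hxy z => ?_⟩
  rw [h1 x z, h1 y z, factor_of_eq_one h5 (hself y) hxy z, h1 y x, hxy, mul_one]

theorem stmt9 (p : Ω → Ω → ℝ) (h1 : Symm p) (h2 : Nonneg p) (h3 : Bounded p)
    (h4 : OProj p) (h5 : Factor p) (x y : Ω) :
    (∀ z : Ω, p x z = p y z) ↔ p x y = 1 :=
  stmt9_general p h1 h3 h4 h5 x y
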